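/- arXiv:1511.09078 — 3 statements merged into one kernel-verified Lean document; each statement's English description precedes it below -/
import Mathlib

section
/- Let I = {I_1,…,I_m} be a partition of {1,…,p} into groups each of size l, let w > 0, let λ₁ ≥ … ≥ λ_m ≥ 0, and let b ∈ ℝ^p satisfy ‖b_{I_1}‖₂ > ‖b_{I_2}‖₂ > … > ‖b_{I_s}‖₂ > 0 and ‖b_{I_j}‖₂ = 0 for all j > s. Set λ^c = (λ_{s+1},…,λ_m)ᵀ. If g ∈ ℝ^p is a subgradient at b of the convex function b ↦ J_λ(w ⟦b⟧_I), i.e. J_λ(w ⟦b+h⟧_I) ≥ J_λ(w ⟦b⟧_I) + gᵀh for all h ∈ ℝ^p, then g_{I_i} = w λ_i · b_{I_i}/‖b_{I_i}‖₂ for every i = 1,…,s, and the vector (‖g_{I_{s+1}}‖₂,…,‖g_{I_m}‖₂)ᵀ ∈ ℝ^{m−s} belongs to the set C_{wλ^c}. -/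
/-!
Both parts test the subgradient inequality against explicit perturbations `h`.

On a group `i ≤ s` the group norms are strictly separated, so moving one coordinate of
`b_{I_i}` by a small `t` does not change their order. Near `t = 0` the function is then
`const + w λ_i ‖b_{I_i} + t e_j‖₂`, which is differentiable in `t`, and a subgradient of a
differentiable function of one variable is its derivative.

For the tail, put vectors of norm `t ≤ ‖b_{I_s}‖₂` in the directions of `g` on the `k + 1` tail
groups where `‖g_{I_r}‖₂` is largest. After the first `s` groups these new group norms come first
in the sorted order, so `J_λ` grows by at most `w t (λ_{s+1} + … + λ_{s+k+1})`, while `gᵀh` is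
`t` times the sum of the `k + 1` largest tail norms of `g`.
-/

open Finset

/-- The nonincreasing rearrangement of the absolute values of the coordinates of `b`. -/
noncomputable def sortedAbs {p : ℕ} (b : Fin p → ℝ) : Fin p → ℝ :=
  fun i => |b (Tuple.sort (fun j => |b j|) (Fin.rev i))|

/-- The sorted ℓ₁ norm `J_λ(b) = Σ_i λ_i |b|_{(i)}`. -/
noncomputable def Jlam {p : ℕ} (lam b : Fin p → ℝ) : ℝ :=
  ∑ i, lam i * sortedAbs b i

/-- With coordinates partitioned into `m` groups of equal size `l` (indexed by
`Fin m × Fin l`), `gnorm b i = ‖b_{I_i}‖₂`. -/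
noncomputable def gnorm {m l : ℕ} (b : Fin m × Fin l → ℝ) (i : Fin m) : ℝ :=
  Real.sqrt (∑ j, b (i, j) ^ 2)

/-- The index `s + k` of the `k`-th group beyond the first `s` groups. -/
def tailIdx {m s : ℕ} (hs : s ≤ m) (k : Fin (m - s)) : Fin m :=
  ⟨s + k.1, by have := k.isLt; omega⟩

open Filter Topology

section SortedL1

variable {p : ℕ}

noncomputable def sortPerm (b : Fin p → ℝ) : Equiv.Perm (Fin p) :=
  Fin.revPerm.trans (Tuple.sort fun j => |b j|)

lemma sortedAbs_eq_abs_sortPerm (b : Fin p → ℝ) (i : Fin p) :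
    sortedAbs b i = |b (sortPerm b i)| := rfl

lemma antitone_sortedAbs (b : Fin p → ℝ) : Antitone (sortedAbs b) :=
  fun _ _ hij => Tuple.monotone_sort (fun j => |b j|) (Fin.rev_le_rev.mpr hij)

lemma sortedAbs_of_antitone {v : Fin p → ℝ} (hv : Antitone v) (hv0 : 0 ≤ v) :
    sortedAbs v = v := by
  have habs : (fun j => |v j|) = v := funext fun j => abs_of_nonneg (hv0 j)
  have hrev : Monotone ((fun j => |v j|) ∘ Fin.revPerm) := by
    rw [habs]
    exact fun i j hij => hv (Fin.rev_le_rev.mpr hij)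
  funext i
  have h := congrFun (Tuple.unique_monotone (Tuple.monotone_sort _) hrev) (Fin.rev i)
  simp only [Function.comp_apply, Fin.revPerm_apply, Fin.rev_rev] at h
  rw [sortedAbs, h, abs_of_nonneg (hv0 i)]

lemma Jlam_of_antitone (lam : Fin p → ℝ) {v : Fin p → ℝ} (hv : Antitone v) (hv0 : 0 ≤ v) :
    Jlam lam v = ∑ i, lam i * v i := by
  rw [Jlam, sortedAbs_of_antitone hv hv0]

lemma Jlam_comp_perm (lam x : Fin p → ℝ) (e : Equiv.Perm (Fin p)) :
    Jlam lam (x ∘ e) = Jlam lam x := by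
  have key := Tuple.comp_perm_comp_sort_eq_comp_sort (f := fun j => |x j|) (σ := e)
  unfold Jlam sortedAbs
  exact Finset.sum_congr rfl fun i _ => congrArg (lam i * ·) (congrFun key (Fin.rev i))

lemma sum_mul_abs_comp_perm_le_Jlam {lam : Fin p → ℝ} (hlam : Antitone lam) (x : Fin p → ℝ)
    (e : Equiv.Perm (Fin p)) : ∑ i, lam i * |x (e i)| ≤ Jlam lam x := by
  have hmv : Monovary lam (sortedAbs x) := fun i j hlt =>
    hlam (not_lt.mp fun hji => (antitone_sortedAbs x hji.le).not_gt hlt)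
  calc ∑ i, lam i * |x (e i)|
      = ∑ i, lam i * sortedAbs x ((e.trans (sortPerm x).symm) i) := by
        simp [sortedAbs_eq_abs_sortPerm]
    _ ≤ Jlam lam x := hmv.sum_mul_comp_perm_le_sum_mul

lemma Jlam_le_Jlam_of_abs_le {lam : Fin p → ℝ} (hlam : Antitone lam) (hlam0 : 0 ≤ lam)
    {x y : Fin p → ℝ} (hxy : ∀ i, |x i| ≤ y i) : Jlam lam x ≤ Jlam lam y :=
  calc Jlam lam x = ∑ i, lam i * |x (sortPerm x i)| := rfl
    _ ≤ ∑ i, lam i * |y (sortPerm x i)| := Finset.sum_le_sum fun i _ =>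
        mul_le_mul_of_nonneg_left ((hxy _).trans (le_abs_self _)) (hlam0 i)
    _ ≤ Jlam lam y := sum_mul_abs_comp_perm_le_Jlam hlam y _

lemma sum_mul_update (lam v : Fin p → ℝ) (i : Fin p) (x : ℝ) :
    ∑ j, lam j * Function.update v i x j = ∑ j, lam j * v j + lam i * (x - v i) := by
  rw [← sub_eq_iff_eq_add', ← Finset.sum_sub_distrib, Finset.sum_eq_single i]
  · simp [mul_sub]
  · intro j _ hj
    simp [hj]
  · simp

lemma eventually_Jlam_update (lam : Fin p → ℝ) {v : Fin p → ℝ} (hv : Antitone v) (hv0 : 0 ≤ v)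
    {i : Fin p} (hpos : 0 < v i) (hlt : ∀ j < i, v i < v j) (hgt : ∀ j, i < j → v j < v i) :
    ∀ᶠ x in 𝓝 (v i), Jlam lam (Function.update v i x) = Jlam lam v + lam i * (x - v i) := by
  have hsep : ∀ᶠ x in 𝓝 (v i), ∀ j, (j < i → x < v j) ∧ (i < j → v j < x) :=
    eventually_all.2 fun j =>
      (eventually_imp_distrib_left.2 fun hj => eventually_lt_nhds (hlt j hj)).and
        (eventually_imp_distrib_left.2 fun hj => eventually_gt_nhds (hgt j hj))
  filter_upwards [eventually_gt_nhds hpos, hsep] with x hx0 hx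
  have hanti : Antitone (Function.update v i x) := by
    intro a c hac
    rcases hac.eq_or_lt with rfl | hlt
    · rfl
    simp only [Function.update_apply]
    split_ifs with hc ha ha
    · exact absurd (ha ▸ hc ▸ hlt) (lt_irrefl _)
    · exact ((hx a).1 (hc ▸ hlt)).le
    · exact ((hx c).2 (ha ▸ hlt)).le
    · exact hv hac
  have hnonneg : 0 ≤ Function.update v i x := by
    intro j
    rcases eq_or_ne j i with rfl | hj
    · simpa using hx0.le
    · simpa [hj] using hv0 j
  rw [Jlam_of_antitone lam hanti hnonneg, Jlam_of_antitone lam hv hv0, sum_mul_update]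

end SortedL1

lemma eq_of_hasDerivAt_of_eventually_le {F : ℝ → ℝ} {F' g x : ℝ} (hF : HasDerivAt F F' x)
    (hsub : ∀ᶠ t in 𝓝 x, F x + g * (t - x) ≤ F t) : g = F' := by
  have hmin : IsLocalMin (fun t => F t - g * (t - x)) x :=
    hsub.mono fun t ht => by simp only [sub_self, mul_zero, sub_zero]; linarith
  have hderiv := hmin.hasDerivAt_eq_zero (hF.sub (((hasDerivAt_id x).sub_const x).const_mul g))
  simp only [mul_one] at hderiv
  linarith

section GroupNorm

variable {m l : ℕ}

lemma gnorm_eq_norm (b : Fin m × Fin l → ℝ) (i : Fin m) :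
    gnorm b i = ‖(WithLp.toLp 2 fun j => b (i, j) : EuclideanSpace ℝ (Fin l))‖ := by
  simp [gnorm, EuclideanSpace.norm_eq]

lemma gnorm_nonneg (b : Fin m × Fin l → ℝ) (i : Fin m) : 0 ≤ gnorm b i :=
  Real.sqrt_nonneg _

lemma sq_gnorm (b : Fin m × Fin l → ℝ) (i : Fin m) : gnorm b i ^ 2 = ∑ j, b (i, j) ^ 2 :=
  Real.sq_sqrt (Finset.sum_nonneg fun _ _ => sq_nonneg _)

lemma gnorm_add_le (b c : Fin m × Fin l → ℝ) (i : Fin m) :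
    gnorm (b + c) i ≤ gnorm b i + gnorm c i := by
  have hadd : (WithLp.toLp 2 fun j => (b + c) (i, j) : EuclideanSpace ℝ (Fin l)) =
      WithLp.toLp 2 (fun j => b (i, j)) + WithLp.toLp 2 fun j => c (i, j) := by
    rw [← WithLp.toLp_add]; rfl
  rw [gnorm_eq_norm, gnorm_eq_norm, gnorm_eq_norm, hadd]
  exact norm_add_le _ _

lemma gnorm_smul (t : ℝ) (b : Fin m × Fin l → ℝ) (i : Fin m) :
    gnorm (t • b) i = |t| * gnorm b i := by
  have hsmul : (WithLp.toLp 2 fun j => (t • b) (i, j) : EuclideanSpace ℝ (Fin l)) =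
      t • WithLp.toLp 2 fun j => b (i, j) := by
    rw [← WithLp.toLp_smul]; rfl
  rw [gnorm_eq_norm, gnorm_eq_norm, hsmul, norm_smul, Real.norm_eq_abs]

lemma gnorm_add_single_of_ne (b : Fin m × Fin l → ℝ) {i i' : Fin m} (j : Fin l) (t : ℝ)
    (hi : i' ≠ i) : gnorm (b + Pi.single (i, j) t) i' = gnorm b i' := by
  simp [gnorm, hi]

lemma gnorm_add_single_self (b : Fin m × Fin l → ℝ) (i : Fin m) (j : Fin l) (t : ℝ) :
    gnorm (b + Pi.single (i, j) t) i = √(gnorm b i ^ 2 + (2 * b (i, j) * t + t ^ 2)) := by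
  have hterm : ∀ j', (b + Pi.single (i, j) t : Fin m × Fin l → ℝ) (i, j') ^ 2 =
      b (i, j') ^ 2 + (Pi.single j (2 * b (i, j) * t + t ^ 2) : Fin l → ℝ) j' := by
    intro j'
    rcases eq_or_ne j' j with rfl | hj
    · simp; ring
    · simp [hj]
  rw [gnorm, sq_gnorm]
  simp only [hterm, Finset.sum_add_distrib, Finset.sum_pi_single', Finset.mem_univ, if_true]

lemma hasDerivAt_gnorm_add_single {b : Fin m × Fin l → ℝ} {i : Fin m} (hb : 0 < gnorm b i)
    (j : Fin l) :
    HasDerivAt (fun t => gnorm (b + Pi.single (i, j) t) i) (b (i, j) / gnorm b i) 0 := by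
  simp only [gnorm_add_single_self]
  have hq : HasDerivAt (fun t : ℝ => gnorm b i ^ 2 + (2 * b (i, j) * t + t ^ 2))
      (2 * b (i, j)) 0 := by
    simpa using (((hasDerivAt_id (0 : ℝ)).const_mul (2 * b (i, j))).add
      (hasDerivAt_pow 2 (0 : ℝ))).const_add (gnorm b i ^ 2)
  convert hq.sqrt (by simp [hb.ne']) using 1
  simp [Real.sqrt_sq hb.le]
  field_simp

lemma gnorm_congr {b c : Fin m × Fin l → ℝ} {i : Fin m} (h : ∀ j, b (i, j) = c (i, j)) :
    gnorm b i = gnorm c i := by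
  simp only [gnorm, h]

/-- On groups where `g` vanishes this is `0`, as `x / 0 = 0`. -/
noncomputable def normalizeOn (A : Finset (Fin m)) (g : Fin m × Fin l → ℝ) :
    Fin m × Fin l → ℝ :=
  fun c => if c.1 ∈ A then g c / gnorm g c.1 else 0

lemma sum_mul_normalizeOn (A : Finset (Fin m)) (g : Fin m × Fin l → ℝ) :
    ∑ c, g c * normalizeOn A g c = ∑ i ∈ A, gnorm g i := by
  have hgroup : ∀ i, ∑ j, g (i, j) * normalizeOn A g (i, j) = if i ∈ A then gnorm g i else 0 := by
    intro i
    by_cases hi : i ∈ A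
    · simp only [normalizeOn, hi, if_true, mul_div_assoc', ← sq, ← Finset.sum_div, ← sq_gnorm]
      rw [sq, mul_self_div_self]
    · simp [normalizeOn, hi]
  rw [Fintype.sum_prod_type]
  simp only [hgroup, Finset.sum_ite_mem, Finset.univ_inter]

lemma gnorm_normalizeOn_le (A : Finset (Fin m)) (g : Fin m × Fin l → ℝ) (i : Fin m) :
    gnorm (normalizeOn A g) i ≤ if i ∈ A then 1 else 0 := by
  by_cases hi : i ∈ A
  · rw [if_pos hi, gnorm_congr (c := (gnorm g i)⁻¹ • g) fun j => by
      simp [normalizeOn, hi, div_eq_inv_mul], gnorm_smul, abs_inv,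
      abs_of_nonneg (gnorm_nonneg g i)]
    exact inv_mul_le_one_of_le₀ le_rfl (gnorm_nonneg g i)
  · simp [gnorm, normalizeOn, hi]

lemma gnorm_add_smul_normalizeOn_le (b g : Fin m × Fin l → ℝ) (A : Finset (Fin m)) {t : ℝ}
    (ht : 0 ≤ t) (i : Fin m) :
    gnorm (b + t • normalizeOn A g) i ≤ gnorm b i + if i ∈ A then t else 0 := by
  refine (gnorm_add_le _ _ _).trans ((add_le_add_iff_left _).2 ?_)
  have hdir := gnorm_normalizeOn_le A g i
  rw [gnorm_smul, abs_of_nonneg ht]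
  split_ifs at hdir ⊢
  · exact mul_le_of_le_one_right ht hdir
  · simp [le_antisymm hdir (gnorm_nonneg _ _)]

end GroupNorm

section Tail

variable {m s : ℕ} (hs : s ≤ m)

def tailEquiv : Fin (m - s) ≃ {i : Fin m // s ≤ (i : ℕ)} where
  toFun r := ⟨tailIdx hs r, Nat.le_add_right _ _⟩
  invFun i := ⟨i.1 - s, by omega⟩
  left_inv r := by ext; simp [tailIdx]
  right_inv i := by ext; simp [tailIdx]; omega

def tailPerm (σ : Equiv.Perm (Fin (m - s))) : Equiv.Perm (Fin m) :=
  σ.extendDomain (tailEquiv hs)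

lemma sum_filter_le_tailIdx {β : Type*} [AddCommMonoid β] (k : Fin (m - s)) (F : Fin m → β) :
    ∑ r ∈ univ.filter (· ≤ k), F (tailIdx hs r) =
      ∑ i ∈ univ.filter (fun i : Fin m => s ≤ (i : ℕ) ∧ (i : ℕ) ≤ s + k), F i := by
  refine Finset.sum_bij (fun r _ => tailIdx hs r) ?_ ?_ ?_ fun _ _ => rfl
  · intro r hr
    simp only [Finset.mem_filter, Finset.mem_univ, true_and, Fin.le_def] at hr ⊢
    simp [tailIdx, hr]
  · intro r _ r' _ h
    simpa [tailIdx, Fin.ext_iff] using h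
  · intro i hi
    simp only [Finset.mem_filter, Finset.mem_univ, true_and] at hi
    refine ⟨⟨i - s, by omega⟩, ?_, ?_⟩
    · simp only [Finset.mem_filter, Finset.mem_univ, true_and, Fin.le_def]
      omega
    · ext; simp [tailIdx]; omega

lemma antitone_of_head_tail {f : Fin m → ℝ}
    (hstrict : ∀ i j : Fin m, (i : ℕ) < (j : ℕ) → (j : ℕ) < s → f j < f i) (hf0 : 0 ≤ f)
    (hzero : ∀ i : Fin m, s ≤ (i : ℕ) → f i = 0) : Antitone f := by
  intro i j hij
  rcases eq_or_lt_of_le hij with rfl | hlt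
  · rfl
  by_cases hj : (j : ℕ) < s
  · exact (hstrict i j hlt hj).le
  · rw [hzero j (by omega)]
    exact hf0 i

lemma antitone_add_indicator {v : Fin m → ℝ} (hv : Antitone v) {c : ℝ} (hc : 0 ≤ c)
    (hhead : ∀ i : Fin m, (i : ℕ) < s → c ≤ v i) (htail : ∀ i : Fin m, s ≤ (i : ℕ) → v i = 0)
    (e : ℕ) : Antitone fun i : Fin m => v i + if s ≤ (i : ℕ) ∧ (i : ℕ) ≤ e then c else 0 := by
  intro i j hij
  have hij' : (i : ℕ) ≤ j := hij
  dsimp only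
  by_cases hj : s ≤ (j : ℕ) ∧ (j : ℕ) ≤ e <;> by_cases hi : s ≤ (i : ℕ) ∧ (i : ℕ) ≤ e
  · simp only [if_pos hi, if_pos hj, htail i hi.1, htail j hj.1, le_refl]
  · rw [if_pos hj, if_neg hi, htail j hj.1, add_zero, zero_add]
    exact hhead i (by omega)
  · rw [if_neg hj, if_pos hi, htail j (by omega), htail i hi.1]
    simpa using hc
  · simpa [if_neg hj, if_neg hi] using hv hij

lemma Jlam_le_add_window {lam v x : Fin m → ℝ} (hlam : Antitone lam) (hlam0 : 0 ≤ lam)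
    (hv : Antitone v) (hv0 : 0 ≤ v) (htail : ∀ i : Fin m, s ≤ (i : ℕ) → v i = 0) {c : ℝ}
    (hc : 0 ≤ c) (hhead : ∀ i : Fin m, (i : ℕ) < s → c ≤ v i) (π : Equiv.Perm (Fin m))
    (k : Fin (m - s))
    (hx : ∀ i, |x (π i)| ≤ v i + if s ≤ (i : ℕ) ∧ (i : ℕ) ≤ s + k then c else 0) :
    Jlam lam x ≤ Jlam lam v + c * ∑ r ∈ univ.filter (· ≤ k), lam (tailIdx hs r) := by
  have hy0 : 0 ≤ fun i : Fin m => v i + if s ≤ (i : ℕ) ∧ (i : ℕ) ≤ s + k then c else 0 :=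
    fun i => add_nonneg (hv0 i) (by positivity)
  calc Jlam lam x = Jlam lam (x ∘ π) := (Jlam_comp_perm _ _ _).symm
    _ ≤ _ := Jlam_le_Jlam_of_abs_le hlam hlam0 hx
    _ = Jlam lam v + c * ∑ r ∈ univ.filter (· ≤ k), lam (tailIdx hs r) := by
      rw [Jlam_of_antitone lam (antitone_add_indicator hv hc hhead htail _) hy0,
        Jlam_of_antitone lam hv hv0, sum_filter_le_tailIdx hs k lam, Finset.mul_sum,
        Finset.sum_filter]
      simp only [mul_add, Finset.sum_add_distrib, mul_ite, mul_zero]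
      congr 1
      refine Finset.sum_congr rfl fun i _ => ?_
      split_ifs <;> ring

variable {hs}

lemma tailPerm_of_lt (σ : Equiv.Perm (Fin (m - s))) {i : Fin m} (hi : (i : ℕ) < s) :
    tailPerm hs σ i = i :=
  Equiv.Perm.extendDomain_apply_not_subtype _ _ (by omega)

lemma tailPerm_tailIdx (σ : Equiv.Perm (Fin (m - s))) (r : Fin (m - s)) :
    tailPerm hs σ (tailIdx hs r) = tailIdx hs (σ r) :=
  Equiv.Perm.extendDomain_apply_image σ (tailEquiv hs) r

lemma apply_tailPerm_of_eq_zero {f : Fin m → ℝ} (hf : ∀ i : Fin m, s ≤ (i : ℕ) → f i = 0)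
    (σ : Equiv.Perm (Fin (m - s))) (i : Fin m) : f (tailPerm hs σ i) = f i := by
  by_cases hi : (i : ℕ) < s
  · rw [tailPerm_of_lt σ hi]
  · rw [hf i (by omega), tailPerm, Equiv.Perm.extendDomain_apply_subtype _ _ (by omega)]
    exact hf _ ((tailEquiv hs) _).prop

end Tail

section Subgradient

variable {m l : ℕ} {w : ℝ} {lam : Fin m → ℝ} {b g : Fin m × Fin l → ℝ}

lemma subgradient_eq_of_separated (hw : 0 < w) (hb_anti : Antitone (gnorm b)) {i : Fin m}
    (hpos : 0 < gnorm b i) (hlt : ∀ i' < i, gnorm b i < gnorm b i')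
    (hgt : ∀ i', i < i' → gnorm b i' < gnorm b i)
    (hsub : ∀ h : Fin m × Fin l → ℝ,
      Jlam lam (fun i => w * gnorm b i) + ∑ c, g c * h c ≤
        Jlam lam (fun i => w * gnorm (b + h) i)) (j : Fin l) :
    g (i, j) = w * lam i * b (i, j) / gnorm b i := by
  set v : Fin m → ℝ := fun i => w * gnorm b i
  set φ : ℝ → ℝ := fun t => gnorm (b + Pi.single (i, j) t) i
  have hφ : HasDerivAt φ (b (i, j) / gnorm b i) 0 := hasDerivAt_gnorm_add_single hpos j
  have hφ0 : w * φ 0 = v i := by simp [φ, v]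
  have hupdate : ∀ t, (fun i' => w * gnorm (b + Pi.single (i, j) t) i') =
      Function.update v i (w * φ t) := by
    intro t
    funext i'
    rcases eq_or_ne i' i with rfl | hi'
    · simp [φ]
    · simp [v, hi', gnorm_add_single_of_ne]
  have hlocal : ∀ᶠ t in 𝓝 0, Jlam lam (Function.update v i (w * φ t)) =
      Jlam lam v + lam i * (w * φ t - v i) := by
    have htend : Tendsto (fun t => w * φ t) (𝓝 0) (𝓝 (v i)) :=
      hφ0 ▸ (hφ.continuousAt.const_mul w).tendsto
    exact htend.eventually <| eventually_Jlam_update lam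
      (fun _ _ h => mul_le_mul_of_nonneg_left (hb_anti h) hw.le) (fun i => mul_nonneg hw.le (gnorm_nonneg b i)) (mul_pos hw hpos)
      (fun i' h => mul_lt_mul_of_pos_left (hlt i' h) hw)
      (fun i' h => mul_lt_mul_of_pos_left (hgt i' h) hw)
  have hderiv := eq_of_hasDerivAt_of_eventually_le ((hφ.const_mul w).const_mul (lam i))
    (g := g (i, j)) <| hlocal.mono fun t ht => by
      have hineq := hsub (Pi.single (i, j) t)
      rw [hupdate, ht] at hineq
      simp only [Pi.single_apply, mul_ite, mul_zero, Finset.sum_ite_eq', Finset.mem_univ,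
        if_true] at hineq
      rw [hφ0]
      linarith
  rw [hderiv]
  field_simp

lemma subgradient_tail_sum_le {s : ℕ} (hs : s ≤ m) (hw : 0 ≤ w) (hlam : Antitone lam)
    (hlam0 : 0 ≤ lam) (hb_anti : Antitone (gnorm b))
    (hb_pos : ∀ i : Fin m, (i : ℕ) < s → 0 < gnorm b i)
    (hb_zero : ∀ i : Fin m, s ≤ (i : ℕ) → gnorm b i = 0)
    (hsub : ∀ h : Fin m × Fin l → ℝ,
      Jlam lam (fun i => w * gnorm b i) + ∑ c, g c * h c ≤
        Jlam lam (fun i => w * gnorm (b + h) i)) (k : Fin (m - s)) :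
    ∑ r ∈ univ.filter (· ≤ k), sortedAbs (fun r => gnorm g (tailIdx hs r)) r ≤
      ∑ r ∈ univ.filter (· ≤ k), w * lam (tailIdx hs r) := by
  obtain ⟨t, ht0, ht⟩ : ∃ t > 0, ∀ i : Fin m, (i : ℕ) < s → t ≤ gnorm b i :=
    ((eventually_mem_nhdsWithin (a := 0) (s := Set.Ioi 0)).and <| eventually_all.2 fun i =>
      eventually_imp_distrib_left.2 fun hi =>
        (eventually_le_nhds (hb_pos i hi)).filter_mono nhdsWithin_le_nhds).exists
  set tg : Fin (m - s) → ℝ := fun r => gnorm g (tailIdx hs r)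
  set π := tailPerm hs (sortPerm tg)
  obtain ⟨W, hW⟩ : ∃ W : Finset (Fin m),
      W = univ.filter fun i : Fin m => s ≤ (i : ℕ) ∧ (i : ℕ) ≤ s + k := ⟨_, rfl⟩
  have hmemW : ∀ i, i ∈ W ↔ s ≤ (i : ℕ) ∧ (i : ℕ) ≤ s + k := by simp [hW]
  -- `π` carries the window `W` onto the `k + 1` tail groups where `‖g_{I_r}‖₂` is largest
  set d := t • normalizeOn (W.map π.toEmbedding) g with hd
  have hinner : ∑ c, g c * d c = t * ∑ r ∈ univ.filter (· ≤ k), sortedAbs tg r := by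
    simp only [hd, Pi.smul_apply, smul_eq_mul, mul_left_comm _ t, ← Finset.mul_sum,
      sum_mul_normalizeOn, Finset.sum_map, Equiv.coe_toEmbedding]
    rw [hW, ← sum_filter_le_tailIdx hs k fun i => gnorm g (π i)]
    congr 1
    refine Finset.sum_congr rfl fun r _ => ?_
    rw [sortedAbs_eq_abs_sortPerm, abs_of_nonneg (gnorm_nonneg _ _)]
    simp [π, tailPerm_tailIdx, tg]
  have hv_zero : ∀ i : Fin m, s ≤ (i : ℕ) → w * gnorm b i = 0 := fun i hi => by
    simp [hb_zero i hi]
  have hmaj : ∀ i, |w * gnorm (b + d) (π i)| ≤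
      w * gnorm b i + if s ≤ (i : ℕ) ∧ (i : ℕ) ≤ s + k then w * t else 0 := by
    intro i
    have hi := gnorm_add_smul_normalizeOn_le b g (W.map π.toEmbedding) ht0.le (π i)
    simp only [Finset.mem_map_equiv, Equiv.symm_apply_apply, hmemW] at hi
    rw [abs_of_nonneg (mul_nonneg hw (gnorm_nonneg _ _)), ← mul_zero w, ← mul_ite, ← mul_add,
      ← apply_tailPerm_of_eq_zero (hs := hs) hb_zero (sortPerm tg) i]
    exact mul_le_mul_of_nonneg_left hi hw
  have hJ := Jlam_le_add_window hs (x := fun i => w * gnorm (b + d) i) hlam hlam0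
    (fun _ _ hij => mul_le_mul_of_nonneg_left (hb_anti hij) hw)
    (fun i => mul_nonneg hw (gnorm_nonneg b i)) hv_zero (mul_nonneg hw ht0.le)
    (fun i hi => mul_le_mul_of_nonneg_left (ht i hi) hw) π k hmaj
  have hfin := (hsub d).trans hJ
  rw [hinner] at hfin
  rw [← Finset.mul_sum]
  exact le_of_mul_le_mul_left (by linarith) ht0

end Subgradient

theorem subgradient_groupSortedL1_general {m l s : ℕ} (hs : s ≤ m)
    (w : ℝ) (hw : 0 < w)
    (lam : Fin m → ℝ)
    (hlam_anti : ∀ i j : Fin m, i ≤ j → lam j ≤ lam i)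
    (hlam_nonneg : ∀ i, 0 ≤ lam i)
    (b : Fin m × Fin l → ℝ)
    (hb_strict : ∀ i j : Fin m, (i : ℕ) < (j : ℕ) → (j : ℕ) < s → gnorm b j < gnorm b i)
    (hb_pos : ∀ i : Fin m, (i : ℕ) < s → 0 < gnorm b i)
    (hb_zero : ∀ i : Fin m, s ≤ (i : ℕ) → gnorm b i = 0)
    (g : Fin m × Fin l → ℝ)
    (hsub : ∀ h : Fin m × Fin l → ℝ,
      Jlam lam (fun i => w * gnorm b i) + ∑ c, g c * h c ≤
        Jlam lam (fun i => w * gnorm (b + h) i)) :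
    (∀ i : Fin m, (i : ℕ) < s → ∀ j : Fin l,
        g (i, j) = w * lam i * b (i, j) / gnorm b i) ∧
    (∀ k : Fin (m - s),
        ∑ i ∈ univ.filter (fun i : Fin (m - s) => i ≤ k),
            sortedAbs (fun i : Fin (m - s) => gnorm g (tailIdx hs i)) i ≤
          ∑ i ∈ univ.filter (fun i : Fin (m - s) => i ≤ k), w * lam (tailIdx hs i)) := by
  have hb_anti : Antitone (gnorm b) := antitone_of_head_tail hb_strict (gnorm_nonneg b) hb_zero
  refine ⟨fun i hi => subgradient_eq_of_separated hw hb_anti (hb_pos i hi)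
    (fun i' hi' => hb_strict i' i hi' hi) (fun i' hi' => ?_) hsub,
    subgradient_tail_sum_le hs hw.le (fun _ _ h => hlam_anti _ _ h) hlam_nonneg hb_anti hb_pos
      hb_zero hsub⟩
  by_cases hi's : (i' : ℕ) < s
  · exact hb_strict i i' hi' hi's
  · rw [hb_zero i' (by omega)]
    exact hb_pos i hi

/-- Theorem 3 (subgradient characterization).  Suppose `‖b_{I_1}‖₂ > … > ‖b_{I_s}‖₂ > 0` and
`‖b_{I_j}‖₂ = 0` for `j > s`.  If `g` is a subgradient at `b` of `b ↦ J_λ(w⟦b⟧_I)`, then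
`g_{I_i} = wλ_i b_{I_i}/‖b_{I_i}‖₂` for `i ≤ s` and `(‖g_{I_{s+1}}‖₂,…,‖g_{I_m}‖₂) ∈ C_{wλᶜ}`,
where `λᶜ = (λ_{s+1},…,λ_m)`. -/
theorem subgradient_groupSortedL1 {m l s : ℕ} (hl : 0 < l) (hs : s ≤ m)
    (w : ℝ) (hw : 0 < w)
    (lam : Fin m → ℝ)
    (hlam_anti : ∀ i j : Fin m, i ≤ j → lam j ≤ lam i)
    (hlam_nonneg : ∀ i, 0 ≤ lam i)
    (b : Fin m × Fin l → ℝ)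
    (hb_strict : ∀ i j : Fin m, (i : ℕ) < (j : ℕ) → (j : ℕ) < s → gnorm b j < gnorm b i)
    (hb_pos : ∀ i : Fin m, (i : ℕ) < s → 0 < gnorm b i)
    (hb_zero : ∀ i : Fin m, s ≤ (i : ℕ) → gnorm b i = 0)
    (g : Fin m × Fin l → ℝ)
    (hsub : ∀ h : Fin m × Fin l → ℝ,
      Jlam lam (fun i => w * gnorm b i) + ∑ c, g c * h c ≤
        Jlam lam (fun i => w * gnorm (b + h) i)) :
    (∀ i : Fin m, (i : ℕ) < s → ∀ j : Fin l,
        g (i, j) = w * lam i * b (i, j) / gnorm b i) ∧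
    (∀ k : Fin (m - s),
        ∑ i ∈ univ.filter (fun i : Fin (m - s) => i ≤ k),
            sortedAbs (fun i : Fin (m - s) => gnorm g (tailIdx hs i)) i ≤
          ∑ i ∈ univ.filter (fun i : Fin (m - s) => i ≤ k), w * lam (tailIdx hs i)) :=
  subgradient_groupSortedL1_general hs w hw lam hlam_anti hlam_nonneg b hb_strict hb_pos hb_zero g
    hsub
end

section
/- Let n and r be positive integers with r ≤ n, and let X be a random n×r matrix whose entries are independent and identically distributed with a normal distribution with zero mean and positive variance. Then the random matrix A_X = X (XᵀX)⁻¹ Xᵀ has a well-defined expectation and E[A_X] = (r/n) · I_n. -/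
/-!
The law of `X` is the product Gaussian measure, which is invariant under permuting the rows of
`X` and under changing the sign of one row. The projection `P = X (XᵀX)⁻¹ Xᵀ` transforms as
`P ↦ σ P σᵀ` and `P ↦ D P D` under these symmetries, so all diagonal entries of `E[P]` are equal
and all off-diagonal ones vanish. The determinant of `XᵀX` is a nonzero polynomial in the entries
of `X` and the entries are atomless, so `XᵀX` is almost surely invertible and then `tr P = r`;
hence each diagonal entry of `E[P]` is `r / n`. Integrability is free: `P` is a symmetric
idempotent, so its entries lie in `[-1, 1]`.
-/

open MeasureTheory ProbabilityTheory Matrix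

namespace MvPolynomial

variable {μ : Measure ℝ} [SigmaFinite μ] [NullSingletonClass μ]

theorem ae_eval_ne_zero_fin :
    ∀ {N : ℕ} {p : MvPolynomial (Fin N) ℝ}, p ≠ 0 →
      ∀ᵐ x ∂Measure.pi fun _ : Fin N => μ, eval x p ≠ 0
  | 0, p, hp => by
    obtain ⟨c, rfl⟩ := C_surjective (Fin 0) p
    exact ae_of_all _ fun x => by simpa using hp
  | N + 1, p, hp => by
    have hq : finSuccEquiv ℝ N p ≠ 0 := by simpa using hp
    have hlead := ae_eval_ne_zero_fin (Polynomial.leadingCoeff_ne_zero.mpr hq)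
    have hmeas : MeasurableSet {z : ℝ × (Fin N → ℝ) | eval (Fin.cons z.1 z.2) p ≠ 0} :=
      (measurableSet_singleton 0).compl.preimage
        ((continuous_eval p).measurable.comp (by fun_prop))
    have hsplit := measurePreserving_piFinSuccAbove (fun _ : Fin (N + 1) => μ) 0
    suffices h : ∀ᵐ z ∂μ.prod (Measure.pi fun _ : Fin N => μ),
        eval (Fin.cons z.1 z.2) p ≠ 0 by
      filter_upwards [hsplit.quasiMeasurePreserving.ae h] with x hx
      simpa [Fin.cons_self_tail] using hx
    rw [Measure.ae_prod_iff_ae_ae hmeas, Measure.ae_ae_comm hmeas]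
    -- off a null set of the last `N` coordinates the leading coefficient in the first variable
    -- survives, leaving finitely many roots in that variable
    filter_upwards [hlead] with s hs
    have hroots : {y | eval (Fin.cons y s) p = 0}.Finite := by
      simp_rw [eval_eq_eval_mv_eval']
      refine Polynomial.finite_setOfPred_isRoot fun h => hs ?_
      simpa using congrArg (·.coeff (finSuccEquiv ℝ N p).natDegree) h
    exact hroots.countable.ae_notMem μ

theorem ae_eval_ne_zero {ι : Type*} [Fintype ι] {p : MvPolynomial ι ℝ} (hp : p ≠ 0) :
    ∀ᵐ x ∂Measure.pi fun _ : ι => μ, eval x p ≠ 0 := by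
  let e := Fintype.equivFin ι
  have hrename : rename e p ≠ 0 := fun h => hp (rename_injective e e.injective (by simpa using h))
  let T := MeasurableEquiv.arrowCongr' e.symm (MeasurableEquiv.refl ℝ)
  have hT : MeasurePreserving T (Measure.pi fun _ => μ) (Measure.pi fun _ => μ) :=
    measurePreserving_arrowCongr' _ _ _ _ fun _ => MeasurePreserving.id μ
  rw [← hT.map_eq, T.measurableEmbedding.ae_map_iff]
  filter_upwards [ae_eval_ne_zero_fin hrename] with x hx
  rwa [eval_rename] at hx

end MvPolynomial

namespace Matrix

variable {m k R : Type*} [Fintype m] [Fintype k] [DecidableEq k] [CommRing R]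

noncomputable def colSpanProj (M : Matrix m k R) : Matrix m m R := M * (Mᵀ * M)⁻¹ * Mᵀ

theorem colSpanProj_of_not_isUnit {M : Matrix m k R} (h : ¬IsUnit (Mᵀ * M).det) :
    colSpanProj M = 0 := by
  rw [colSpanProj, nonsing_inv_apply_not_isUnit _ h, Matrix.mul_zero, Matrix.zero_mul]

theorem isSymm_colSpanProj (M : Matrix m k R) : (colSpanProj M).IsSymm := by
  simp only [IsSymm, colSpanProj, transpose_mul, transpose_nonsing_inv, transpose_transpose,
    Matrix.mul_assoc]

theorem isIdempotentElem_colSpanProj {M : Matrix m k R} (h : IsUnit (Mᵀ * M).det) :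
    IsIdempotentElem (colSpanProj M) := by
  calc colSpanProj M * colSpanProj M
      = M * ((Mᵀ * M)⁻¹ * (Mᵀ * M)) * (Mᵀ * M)⁻¹ * Mᵀ := by
        simp only [colSpanProj, Matrix.mul_assoc]
    _ = colSpanProj M := by rw [nonsing_inv_mul _ h, Matrix.mul_one, colSpanProj]

theorem trace_colSpanProj {M : Matrix m k R} (h : IsUnit (Mᵀ * M).det) :
    (colSpanProj M).trace = Fintype.card k := by
  rw [colSpanProj, trace_mul_cycle, mul_nonsing_inv _ h, trace_one]

theorem colSpanProj_submatrix {m' : Type*} [Fintype m'] (M : Matrix m k R) (e : m' ≃ m) :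
    colSpanProj (M.submatrix e id) = (colSpanProj M).submatrix e e := by
  have hgram : (M.submatrix e id)ᵀ * M.submatrix e id = Mᵀ * M := by
    rw [transpose_submatrix, submatrix_mul_equiv _ _ _ e, submatrix_id_id]
  rw [colSpanProj, hgram, transpose_submatrix, colSpanProj,
    ← submatrix_mul_equiv _ _ _ (Equiv.refl k), ← submatrix_mul_equiv _ _ _ (Equiv.refl k)]
  rfl

theorem colSpanProj_diagonal_mul [DecidableEq m] (M : Matrix m k R) {d : m → R}
    (hd : ∀ i, d i * d i = 1) :
    colSpanProj (diagonal d * M) = diagonal d * colSpanProj M * diagonal d := by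
  have hgram : (diagonal d * M)ᵀ * (diagonal d * M) = Mᵀ * M := by
    rw [transpose_mul, diagonal_transpose, Matrix.mul_assoc, ← Matrix.mul_assoc (diagonal d),
      diagonal_mul_diagonal, funext hd, diagonal_one, Matrix.one_mul]
  rw [colSpanProj, hgram, transpose_mul, diagonal_transpose, colSpanProj]
  simp only [Matrix.mul_assoc]

theorem IsSymm.abs_apply_le_one_of_isIdempotentElem {P : Matrix m m ℝ} (hsymm : P.IsSymm)
    (hidem : IsIdempotentElem P) (i j : m) : |P i j| ≤ 1 := by
  have hdiag : ∀ a, P a a = ∑ b, P a b ^ 2 := fun a => by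
    conv_lhs => rw [← hidem]
    simp only [mul_apply, sq]
    exact Finset.sum_congr rfl fun b _ => by rw [hsymm.apply b a]
  have hle : ∀ a b, P a b ^ 2 ≤ P a a := fun a b => by
    rw [hdiag a]
    exact Finset.single_le_sum (f := fun b => P a b ^ 2) (fun _ _ => sq_nonneg _)
      (Finset.mem_univ b)
  have hii : P i i ≤ 1 := by nlinarith [hle i i]
  rw [← sq_le_one_iff_abs_le_one]
  exact (hle i j).trans hii

theorem abs_colSpanProj_apply_le_one (M : Matrix m k ℝ) (i j : m) :
    |colSpanProj M i j| ≤ 1 := by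
  by_cases h : IsUnit (Mᵀ * M).det
  · exact (isSymm_colSpanProj M).abs_apply_le_one_of_isIdempotentElem
      (isIdempotentElem_colSpanProj h) i j
  · simp [colSpanProj_of_not_isUnit h]

theorem measurable_colSpanProj_apply (i j : m) :
    Measurable fun x : m × k → ℝ => colSpanProj (of (Function.curry x)) i j := by
  simp only [colSpanProj, inv_def, Ring.inverse_eq_inv', Matrix.mul_smul, Matrix.smul_mul,
    smul_apply, smul_eq_mul]
  have hM : Continuous fun x : m × k → ℝ => of (Function.curry x) :=
    continuous_matrix fun a b => continuous_apply (a, b)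
  refine Measurable.mul (Continuous.measurable ?_).inv (Continuous.measurable ?_) <;> fun_prop

theorem ae_isUnit_det_transpose_mul_self {μ : Measure ℝ} [SigmaFinite μ] [NullSingletonClass μ]
    (hcard : Fintype.card k ≤ Fintype.card m) :
    ∀ᵐ x ∂Measure.pi fun _ : m × k => μ,
      IsUnit ((of (Function.curry x))ᵀ * of (Function.curry x)).det := by
  let V : Matrix m k (MvPolynomial (m × k) ℝ) := of fun a b => MvPolynomial.X (a, b)
  have heval : ∀ x, MvPolynomial.eval x (Vᵀ * V).det
      = ((of (Function.curry x))ᵀ * of (Function.curry x)).det := fun x => by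
    rw [RingHom.map_det]
    congr 1
    ext a b
    simp [V, mul_apply]
  obtain ⟨f⟩ := Function.Embedding.nonempty_of_card_le hcard
  have hne : (Vᵀ * V).det ≠ 0 := fun h => by
    classical
    let x₀ : m × k → ℝ := fun q => if q.1 = f q.2 then 1 else 0
    have horth : (of (Function.curry x₀))ᵀ * of (Function.curry x₀) = 1 := by
      ext a b
      simp [x₀, mul_apply, one_apply, f.injective.eq_iff, eq_comm]
    simpa [h, horth] using heval x₀
  filter_upwards [MvPolynomial.ae_eval_ne_zero hne] with x hx
  exact isUnit_iff_ne_zero.mpr (heval x ▸ hx)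

end Matrix

section IIDEntries

variable {m k : Type*} [Fintype m] [Fintype k] [DecidableEq k] {μ : Measure ℝ}

theorem integrable_colSpanProj_apply [IsFiniteMeasure μ] (i j : m) :
    Integrable (fun x => colSpanProj (of (Function.curry x)) i j)
      (Measure.pi fun _ : m × k => μ) :=
  .of_bound (measurable_colSpanProj_apply i j).aestronglyMeasurable 1
    (ae_of_all _ fun _ => abs_colSpanProj_apply_le_one _ i j)

theorem integral_colSpanProj_apply_self_eq [DecidableEq m] [SigmaFinite μ] (i j : m) :
    ∫ x, colSpanProj (of (Function.curry x)) i i ∂Measure.pi (fun _ : m × k => μ)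
      = ∫ x, colSpanProj (of (Function.curry x)) j j ∂Measure.pi (fun _ : m × k => μ) := by
  let T := MeasurableEquiv.arrowCongr' ((Equiv.swap i j).prodCongr (Equiv.refl k))
    (MeasurableEquiv.refl ℝ)
  have hT : MeasurePreserving T (Measure.pi fun _ => μ) (Measure.pi fun _ => μ) :=
    measurePreserving_arrowCongr' _ _ _ _ fun _ => MeasurePreserving.id μ
  rw [← hT.integral_comp']
  congr 1
  ext x
  have hrows :
      of (Function.curry (T x)) = (of (Function.curry x)).submatrix (Equiv.swap i j) id := by
    ext a b
    simp [T, MeasurableEquiv.arrowCongr', Equiv.arrowCongr']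
  rw [hrows, colSpanProj_submatrix]
  simp

theorem integral_colSpanProj_apply_of_ne [DecidableEq m] [SigmaFinite μ]
    (hμ : μ.map (fun y => -y) = μ) {i j : m} (hij : i ≠ j) :
    ∫ x, colSpanProj (of (Function.curry x)) i j ∂Measure.pi (fun _ : m × k => μ) = 0 := by
  let flip : (m × k → ℝ) → m × k → ℝ := fun x q => if q.1 = i then -x q else x q
  have hflip : MeasurePreserving flip (Measure.pi fun _ => μ) (Measure.pi fun _ => μ) := by
    convert measurePreserving_pi (fun _ => μ) (fun _ => μ)
      (f := fun q : m × k => if q.1 = i then (fun y : ℝ => -y) else id)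
      fun q => by split_ifs; exacts [⟨measurable_neg, hμ⟩, .id μ] using 1
    ext x q
    simp only [flip]
    split_ifs <;> rfl
  let d : m → ℝ := fun a => if a = i then -1 else 1
  have hflip_rows : ∀ x, of (Function.curry (flip x)) = diagonal d * of (Function.curry x) := by
    intro x
    ext a b
    by_cases ha : a = i <;> simp [flip, d, ha]
  have hneg : ∀ x, colSpanProj (of (Function.curry (flip x))) i j
      = -colSpanProj (of (Function.curry x)) i j := by
    intro x
    rw [hflip_rows, colSpanProj_diagonal_mul _ fun a => by by_cases ha : a = i <;> simp [d, ha]]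
    simp [d, diagonal_mul, mul_diagonal, Ne.symm hij]
  have hinv :
      ∫ x, colSpanProj (of (Function.curry (flip x))) i j ∂Measure.pi (fun _ : m × k => μ)
        = ∫ x, colSpanProj (of (Function.curry x)) i j ∂Measure.pi (fun _ : m × k => μ) := by
    rw [← integral_map hflip.measurable.aemeasurable
      (measurable_colSpanProj_apply i j).aestronglyMeasurable, hflip.map_eq]
  simp only [hneg, integral_neg] at hinv
  linarith

theorem sum_integral_colSpanProj_apply_self [IsProbabilityMeasure μ] [NullSingletonClass μ]
    (hcard : Fintype.card k ≤ Fintype.card m) :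
    ∑ a, ∫ x, colSpanProj (of (Function.curry x)) a a ∂Measure.pi (fun _ : m × k => μ)
      = Fintype.card k := by
  rw [← integral_finsetSum _ fun a _ => integrable_colSpanProj_apply a a]
  have htrace : ∀ᵐ x ∂Measure.pi (fun _ : m × k => μ),
      ∑ a, colSpanProj (of (Function.curry x)) a a = (Fintype.card k : ℝ) := by
    filter_upwards [ae_isUnit_det_transpose_mul_self hcard] with x hx
    exact trace_colSpanProj hx
  simp [integral_congr_ae htrace]

theorem integral_colSpanProj_apply [DecidableEq m] [IsProbabilityMeasure μ]
    [NullSingletonClass μ] (hμ : μ.map (fun y => -y) = μ)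
    (hcard : Fintype.card k ≤ Fintype.card m) (i j : m) :
    ∫ x, colSpanProj (of (Function.curry x)) i j ∂Measure.pi (fun _ : m × k => μ)
      = (((Fintype.card k : ℝ) / Fintype.card m) • (1 : Matrix m m ℝ)) i j := by
  rcases eq_or_ne i j with rfl | hij
  · have hm : (Fintype.card m : ℝ) ≠ 0 :=
      Nat.cast_ne_zero.mpr (Fintype.card_pos_iff.mpr ⟨i⟩).ne'
    rw [← sum_integral_colSpanProj_apply_self (μ := μ) hcard,
      Finset.sum_congr rfl fun a _ => integral_colSpanProj_apply_self_eq a i]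
    simp [field]
  · simp [integral_colSpanProj_apply_of_ne hμ hij, one_apply_ne hij]

end IIDEntries

theorem expectation_gaussian_projection_general {n r : ℕ} (hrn : r ≤ n)
    {Ω : Type*} [MeasurableSpace Ω] (μ : Measure Ω)
    (X : Ω → Matrix (Fin n) (Fin r) ℝ)
    (hindep : iIndepFun
      (fun (q : Fin n × Fin r) ω => X ω q.1 q.2) μ)
    (v : NNReal) (hv : v ≠ 0)
    (hdist : ∀ q : Fin n × Fin r, μ.map (fun ω => X ω q.1 q.2) = gaussianReal 0 v) :
    ∀ i j : Fin n,
      Integrable (fun ω => (X ω * ((X ω)ᵀ * X ω)⁻¹ * (X ω)ᵀ) i j) μ ∧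
      ∫ ω, (X ω * ((X ω)ᵀ * X ω)⁻¹ * (X ω)ᵀ) i j ∂μ =
        (((r : ℝ) / (n : ℝ)) • (1 : Matrix (Fin n) (Fin n) ℝ)) i j := by
  intro i j
  have : NullSingletonClass (gaussianReal 0 v) :=
    ⟨fun y => gaussianReal_absolutelyContinuous 0 hv (measure_singleton y)⟩
  have hentry (q : Fin n × Fin r) : AEMeasurable (fun ω => X ω q.1 q.2) μ :=
    aemeasurable_of_map_neZero (by rw [hdist q]; infer_instance)
  have hlaw : μ.map (fun ω (q : Fin n × Fin r) => X ω q.1 q.2)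
      = Measure.pi fun _ => gaussianReal 0 v := by
    simp_rw [hindep.map_fun_eq_pi_map hentry, hdist]
  have hmatrix := aemeasurable_pi_lambda _ hentry
  have hproj := Matrix.measurable_colSpanProj_apply (k := Fin r) i j
  refine ⟨(integrable_map_measure hproj.aestronglyMeasurable hmatrix).1 ?_, ?_⟩
  · exact hlaw ▸ integrable_colSpanProj_apply i j
  · refine (integral_map hmatrix hproj.aestronglyMeasurable).symm.trans ?_
    rw [hlaw, integral_colSpanProj_apply
      (by simpa using gaussianReal_map_neg (μ := 0) (v := v)) (by simpa using hrn)]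
    simp

/-- If `X` is a random `n×r` matrix (`1 ≤ r ≤ n`) with i.i.d. centered nondegenerate Gaussian
entries, then the orthogonal projection `A_X = X(XᵀX)⁻¹Xᵀ` has a well-defined (entrywise)
expectation and `E[A_X] = (r/n)·I_n`. -/
theorem expectation_gaussian_projection {n r : ℕ} (hr : 1 ≤ r) (hrn : r ≤ n)
    {Ω : Type*} [MeasurableSpace Ω] (μ : Measure Ω) [IsProbabilityMeasure μ]
    (X : Ω → Matrix (Fin n) (Fin r) ℝ)
    (hmeas : ∀ i j, Measurable (fun ω => X ω i j))
    (hindep : iIndepFun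
      (fun (q : Fin n × Fin r) ω => X ω q.1 q.2) μ)
    (v : NNReal) (hv : v ≠ 0)
    (hdist : ∀ q : Fin n × Fin r, μ.map (fun ω => X ω q.1 q.2) = gaussianReal 0 v) :
    ∀ i j : Fin n,
      Integrable (fun ω => (X ω * ((X ω)ᵀ * X ω)⁻¹ * (X ω)ᵀ) i j) μ ∧
      ∫ ω, (X ω * ((X ω)ᵀ * X ω)⁻¹ * (X ω)ᵀ) i j ∂μ =
        (((r : ℝ) / (n : ℝ)) • (1 : Matrix (Fin n) (Fin n) ℝ)) i j :=
  expectation_gaussian_projection_general hrn μ X hindep v hv hdist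
end

section
/- Let l ≥ 1 and m ≥ 2 be integers and let Ψ₁,…,Ψ_m be independent random variables, each having the chi-square distribution with l degrees of freedom. Then E[max_{i=1,…,m} Ψ_i] ≤ 4 ln(m) / (1 − m^{−2/l}). -/
open MeasureTheory ProbabilityTheory

/-- The chi-square distribution with `l` degrees of freedom, i.e. the Gamma distribution with
shape `l/2` and rate `1/2`. -/
noncomputable def chiSqMeasure (l : ℕ) : Measure ℝ :=
  gammaMeasure ((l : ℝ) / 2) (1 / 2)

/-!
Since `max_i Ψ_i ≤ t⁻¹ log ∑_i exp (t Ψ_i)` for every `t > 0`, Jensen's inequality for the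
concave `log` bounds `E[max_i Ψ_i]` by `t⁻¹ log (m · (1 - 2t)^{-l/2})`, where
`(1 - 2t)^{-l/2}` is the chi-square moment generating function. The choice
`1 - 2t = m^{-2/l}` makes each moment generating function equal to `m`, which gives
`E[max_i Ψ_i] ≤ 2 log (m²) / (1 - m^{-2/l})`.
-/

open Real

section Gamma

variable {a r t : ℝ}

lemma measurable_gammaPDF (a r : ℝ) : Measurable (gammaPDF a r) :=
  (measurable_gammaPDFReal a r).ennreal_ofReal

lemma gammaPDFReal_mul_exp (hr : 0 < r) (htr : t < r) (x : ℝ) :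
    gammaPDFReal a r x * exp (t * x) = (r / (r - t)) ^ a * gammaPDFReal a (r - t) x := by
  have hrt : 0 < r - t := sub_pos.mpr htr
  have hr_pow : r ^ a = (r / (r - t)) ^ a * (r - t) ^ a := by
    rw [← mul_rpow (by positivity) hrt.le, div_mul_cancel₀ _ hrt.ne']
  have hexp : exp (-(r * x)) * exp (t * x) = exp (-((r - t) * x)) := by
    rw [← exp_add]; ring_nf
  unfold gammaPDFReal
  split_ifs
  · rw [mul_assoc, hexp, hr_pow]; ring
  · ring

lemma lintegral_exp_mul_gammaMeasure (ha : 0 < a) (hr : 0 < r) (htr : t < r) :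
    ∫⁻ x, ENNReal.ofReal (exp (t * x)) ∂gammaMeasure a r
      = ENNReal.ofReal ((r / (r - t)) ^ a) := by
  rw [gammaMeasure, lintegral_withDensity_eq_lintegral_mul _ (measurable_gammaPDF a r)
    (by fun_prop)]
  calc ∫⁻ x, gammaPDF a r x * ENNReal.ofReal (exp (t * x))
      = ∫⁻ x, ENNReal.ofReal ((r / (r - t)) ^ a) * gammaPDF a (r - t) x := by
        refine lintegral_congr fun x => ?_
        rw [gammaPDF, gammaPDF, ← ENNReal.ofReal_mul' (exp_nonneg _),
          gammaPDFReal_mul_exp hr htr, ENNReal.ofReal_mul (by positivity)]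
    _ = ENNReal.ofReal ((r / (r - t)) ^ a) := by
        rw [lintegral_const_mul _ (measurable_gammaPDF a (r - t)),
          lintegral_gammaPDF_eq_one ha (sub_pos.mpr htr), mul_one]

lemma mgf_gammaMeasure (ha : 0 < a) (hr : 0 < r) (htr : t < r) :
    mgf id (gammaMeasure a r) t = (r / (r - t)) ^ a := by
  have hrt : 0 < r - t := sub_pos.mpr htr
  simp only [mgf, id_eq]
  rw [integral_eq_lintegral_of_nonneg_ae (ae_of_all _ fun x => exp_nonneg _)
    (by fun_prop : Measurable fun x => exp (t * x)).aestronglyMeasurable,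
    lintegral_exp_mul_gammaMeasure ha hr htr, ENNReal.toReal_ofReal (by positivity)]

lemma ae_nonneg_gammaMeasure (a r : ℝ) : ∀ᵐ x ∂gammaMeasure a r, 0 ≤ x := by
  rw [gammaMeasure, ae_withDensity_iff (measurable_gammaPDF a r)]
  exact ae_of_all _ fun x hx => not_lt.mp fun hneg => hx (gammaPDF_of_neg hneg)

end Gamma

lemma mgf_chiSqMeasure {l : ℕ} (hl : 0 < l) {t : ℝ} (ht : t < 1 / 2) :
    mgf id (chiSqMeasure l) t = (1 - 2 * t) ^ (-(l : ℝ) / 2) := by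
  have h2t : 0 < 1 - 2 * t := by linarith
  rw [chiSqMeasure, mgf_gammaMeasure (by positivity) one_half_pos ht,
    show (1 / 2 : ℝ) / (1 / 2 - t) = (1 - 2 * t)⁻¹ by field_simp, inv_rpow h2t.le,
    ← rpow_neg h2t.le, neg_div]

lemma integrable_log_of_one_le {Ω : Type*} [MeasurableSpace Ω] {μ : Measure Ω} {f : Ω → ℝ}
    (hf : Integrable f μ) (hf_one : ∀ᵐ ω ∂μ, 1 ≤ f ω) : Integrable (fun ω => log (f ω)) μ := by
  refine hf.mono (measurable_log.comp_aemeasurable hf.aemeasurable).aestronglyMeasurable ?_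
  filter_upwards [hf_one] with ω hω
  rw [norm_of_nonneg (log_nonneg hω), norm_of_nonneg (by linarith)]
  exact log_le_self (by linarith)

section MaxBound

variable {ι Ω : Type*} [Fintype ι] [Nonempty ι] [MeasurableSpace Ω] {μ : Measure Ω}
  [IsProbabilityMeasure μ]

lemma iSup_le_log_sum_exp_div {t : ℝ} (ht : 0 < t) (x : ι → ℝ) :
    ⨆ i, x i ≤ log (∑ i, exp (t * x i)) / t := by
  refine ciSup_le fun i => (le_div_iff₀ ht).mpr ?_
  rw [mul_comm, le_log_iff_exp_le (by positivity)]
  exact Finset.single_le_sum (f := fun j => exp (t * x j)) (fun j _ => (exp_pos _).le)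
    (Finset.mem_univ i)

lemma integral_log_le_log_integral {f : Ω → ℝ} (hf : Integrable f μ)
    (hf_one : ∀ᵐ ω ∂μ, 1 ≤ f ω) :
    ∫ ω, log (f ω) ∂μ ≤ log (∫ ω, f ω ∂μ) := by
  have hconc : ConcaveOn ℝ (Set.Ici 1) log :=
    strictConcaveOn_log_Ioi.concaveOn.subset (Set.Ici_subset_Ioi.mpr one_pos)
      (convex_Ici 1)
  exact hconc.le_map_integral
    (continuousOn_log.mono fun x (hx : 1 ≤ x) => (one_pos.trans_le hx).ne')
    isClosed_Ici hf_one hf (integrable_log_of_one_le hf hf_one)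

lemma integral_iSup_le_log_sum_mgf_div {X : ι → Ω → ℝ} {t : ℝ} (ht : 0 < t)
    (hX : ∀ i, ∀ᵐ ω ∂μ, 0 ≤ X i ω) (hint : ∀ i, Integrable (fun ω => exp (t * X i ω)) μ) :
    ∫ ω, ⨆ i, X i ω ∂μ ≤ log (∑ i, mgf (X i) μ t) / t := by
  set S : Ω → ℝ := fun ω => ∑ i, exp (t * X i ω)
  have hS_int : Integrable S μ := integrable_finsetSum _ fun i _ => hint i
  have hX_all : ∀ᵐ ω ∂μ, ∀ i, 0 ≤ X i ω := ae_all_iff.mpr hX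
  have hS_one : ∀ᵐ ω ∂μ, 1 ≤ S ω := by
    filter_upwards [hX_all] with ω hω
    obtain ⟨i⟩ := ‹Nonempty ι›
    calc 1 ≤ exp (t * X i ω) := one_le_exp (mul_nonneg ht.le (hω i))
      _ ≤ S ω := Finset.single_le_sum (f := fun j => exp (t * X j ω))
          (fun j _ => (exp_pos _).le) (Finset.mem_univ i)
  have hsup_nonneg : ∀ᵐ ω ∂μ, 0 ≤ ⨆ i, X i ω := by
    filter_upwards [hX_all] with ω hω
    obtain ⟨i⟩ := ‹Nonempty ι›
    exact (hω i).trans (le_ciSup (f := fun j => X j ω) (Set.finite_range _).bddAbove i)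
  calc ∫ ω, ⨆ i, X i ω ∂μ ≤ ∫ ω, log (S ω) / t ∂μ :=
        integral_mono_of_nonneg hsup_nonneg
          ((integrable_log_of_one_le hS_int hS_one).div_const t)
          (ae_of_all _ fun ω => iSup_le_log_sum_exp_div ht _)
    _ = (∫ ω, log (S ω) ∂μ) / t := integral_div t _
    _ ≤ log (∫ ω, S ω ∂μ) / t :=
        div_le_div_of_nonneg_right (integral_log_le_log_integral hS_int hS_one) ht.le
    _ = log (∑ i, mgf (X i) μ t) / t := by
        rw [integral_finsetSum _ fun i _ => hint i]; rfl

end MaxBound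

theorem expectation_max_chiSq_general (l m : ℕ) (hl : 1 ≤ l) (hm : 2 ≤ m)
    {Ω : Type*} [MeasurableSpace Ω] (μ : Measure Ω) [IsProbabilityMeasure μ]
    (Ψ : Fin m → Ω → ℝ) (hmeas : ∀ i, Measurable (Ψ i))
    (hdist : ∀ i, μ.map (Ψ i) = chiSqMeasure l) :
    ∫ ω, (⨆ i : Fin m, Ψ i ω) ∂μ ≤
      4 * Real.log m / (1 - (m : ℝ) ^ (-(2 : ℝ) / (l : ℝ))) := by
  have : Nonempty (Fin m) := ⟨⟨0, by omega⟩⟩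
  have hm_pos : (0 : ℝ) < m := by positivity
  set δ : ℝ := (m : ℝ) ^ (-(2 : ℝ) / (l : ℝ))
  have hδ_pos : 0 < δ := rpow_pos_of_pos hm_pos _
  have hδ_lt_one : δ < 1 := rpow_lt_one_of_one_lt_of_neg (by exact_mod_cast hm)
    (div_neg_of_neg_of_pos (by norm_num) (Nat.cast_pos.mpr hl))
  have hmgf : ∀ i, mgf (Ψ i) μ ((1 - δ) / 2) = m := fun i => by
    rw [← mgf_id_map (hmeas i).aemeasurable, hdist i, mgf_chiSqMeasure hl (by linarith),
      show 1 - 2 * ((1 - δ) / 2) = δ by ring, ← rpow_mul hm_pos.le,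
      show -(2 : ℝ) / l * (-(l : ℝ) / 2) = 1 by field_simp, rpow_one]
  have hbound := integral_iSup_le_log_sum_mgf_div (μ := μ) (X := Ψ) (t := (1 - δ) / 2)
    (by linarith)
    (fun i => ae_of_ae_map (hmeas i).aemeasurable (hdist i ▸ ae_nonneg_gammaMeasure _ _))
    (fun i => mgf_pos_iff.mp (hmgf i ▸ hm_pos))
  calc ∫ ω, (⨆ i, Ψ i ω) ∂μ ≤ log (m * m) / ((1 - δ) / 2) := by
        simpa only [hmgf, Finset.sum_const, Finset.card_univ, Fintype.card_fin,
          nsmul_eq_mul] using hbound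
    _ = 4 * log m / (1 - δ) := by
        rw [log_mul hm_pos.ne' hm_pos.ne']; field_simp; ring

/-- If `Ψ₁,…,Ψ_m` (with `m ≥ 2`) are independent random variables, each chi-square
distributed with `l ≥ 1` degrees of freedom, then
`E[max_i Ψ_i] ≤ 4 ln(m) / (1 − m^{−2/l})`. -/
theorem expectation_max_chiSq (l m : ℕ) (hl : 1 ≤ l) (hm : 2 ≤ m)
    {Ω : Type*} [MeasurableSpace Ω] (μ : Measure Ω) [IsProbabilityMeasure μ]
    (Ψ : Fin m → Ω → ℝ) (hmeas : ∀ i, Measurable (Ψ i))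
    (hindep : iIndepFun Ψ μ)
    (hdist : ∀ i, μ.map (Ψ i) = chiSqMeasure l) :
    ∫ ω, (⨆ i : Fin m, Ψ i ω) ∂μ ≤
      4 * Real.log m / (1 - (m : ℝ) ^ (-(2 : ℝ) / (l : ℝ))) :=
  expectation_max_chiSq_general l m hl hm μ Ψ hmeas hdist
end
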